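/- Let M be a nonzero injective right module over a ring A such that every nonzero submodule of M is isomorphic to M. Then every nonzero endomorphism f of M admits endomorphisms g and h of M with h ∘ f ∘ g = id_M. -/

import Mathlib

/-!
The kernel `K` of `f` is either zero or isomorphic to `M`, hence injective, hence a direct summand;
since `f ≠ 0`, a complement `C` of `K` is nonzero, so `C ≅ M`. Then `g : M ≅ C ↪ M` makes `f ∘ g`
injective, and injectivity of `M` gives a left inverse `h` of `f ∘ g`.
-/

open LinearMap

universe v

namespace Module.Injective

variable {R : Type*} [Ring R] {Q : Type v} [AddCommGroup Q] [Module R Q]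

theorem of_linearEquiv {Q' : Type v} [AddCommGroup Q'] [Module R Q'] (e : Q' ≃ₗ[R] Q)
    [Module.Injective R Q] : Module.Injective R Q' where
  out _ _ _ _ _ _ i hi g := by
    obtain ⟨h, hh⟩ := Module.Injective.out i hi (e.toLinearMap ∘ₗ g)
    exact ⟨e.symm.toLinearMap ∘ₗ h, fun x => by simp [hh x]⟩

theorem exists_leftInverse_of_injective [Module.Injective R Q] {Y : Type v} [AddCommGroup Y]
    [Module R Y] (i : Q →ₗ[R] Y) (hi : Function.Injective i) :
    ∃ r : Y →ₗ[R] Q, r ∘ₗ i = LinearMap.id := by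
  obtain ⟨r, hr⟩ := Module.Injective.out i hi LinearMap.id
  exact ⟨r, LinearMap.ext hr⟩

end Module.Injective

namespace Submodule

variable {R : Type*} [Ring R] {M : Type*} [AddCommGroup M] [Module R M]

theorem exists_isCompl_of_injective (N : Submodule R M) [Module.Injective R N] :
    ∃ C : Submodule R M, IsCompl N C := by
  obtain ⟨r, hr⟩ := Module.Injective.exists_leftInverse_of_injective N.subtype N.injective_subtype
  exact ⟨ker r, isCompl_of_proj fun x => congr($hr x)⟩

theorem complementedLattice_of_forall_injective
    (h : ∀ N : Submodule R M, N ≠ ⊥ → Module.Injective R N) :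
    ComplementedLattice (Submodule R M) where
  exists_isCompl N := by
    by_cases hN : N = ⊥
    · exact ⟨⊤, hN ▸ isCompl_bot_top⟩
    · have := h N hN
      exact N.exists_isCompl_of_injective

end Submodule

theorem stmt17_general (A : Type*) [Ring A]
    (M : Type*) [AddCommGroup M] [Module Aᵐᵒᵖ M]
    (hM : Module.Injective Aᵐᵒᵖ M)
    (hsub : ∀ N : Submodule Aᵐᵒᵖ M, N ≠ ⊥ → Nonempty (N ≃ₗ[Aᵐᵒᵖ] M))
    (f : M →ₗ[Aᵐᵒᵖ] M) (hf : f ≠ 0) :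
    ∃ g h : M →ₗ[Aᵐᵒᵖ] M, h ∘ₗ f ∘ₗ g = LinearMap.id := by
  have hinj (N : Submodule Aᵐᵒᵖ M) (hN : N ≠ ⊥) : Module.Injective Aᵐᵒᵖ N :=
    .of_linearEquiv (hsub N hN).some
  have := Submodule.complementedLattice_of_forall_injective hinj
  obtain ⟨C, hC⟩ := exists_isCompl (ker f)
  have hC_ne_bot : C ≠ ⊥ := fun hC_bot =>
    hf (ker_eq_top.mp (eq_top_of_isCompl_bot (hC_bot ▸ hC)))
  obtain ⟨e⟩ := hsub C hC_ne_bot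
  let g := C.subtype ∘ₗ e.symm.toLinearMap
  have hfg : Function.Injective (f ∘ₗ g) :=
    (injective_domRestrict_iff.mpr hC.disjoint.symm).comp e.symm.injective
  obtain ⟨h, hh⟩ := hM.exists_leftInverse_of_injective _ hfg
  exact ⟨g, h, hh⟩

/-- If `M` is a nonzero injective right `A`-module (a module over `Aᵐᵒᵖ`) all of
whose nonzero submodules are isomorphic to `M`, then every nonzero endomorphism
`f` of `M` has endomorphisms `g, h` with `h ∘ f ∘ g = id`. -/
theorem stmt17 (A : Type*) [Ring A]
    (M : Type*) [AddCommGroup M] [Module Aᵐᵒᵖ M] [Nontrivial M]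
    (hM : Module.Injective Aᵐᵒᵖ M)
    (hsub : ∀ N : Submodule Aᵐᵒᵖ M, N ≠ ⊥ → Nonempty (N ≃ₗ[Aᵐᵒᵖ] M))
    (f : M →ₗ[Aᵐᵒᵖ] M) (hf : f ≠ 0) :
    ∃ g h : M →ₗ[Aᵐᵒᵖ] M, h ∘ₗ f ∘ₗ g = LinearMap.id :=
  stmt17_general A M hM hsub f hf
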